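/- arXiv:math/0210193 — 3 statements merged into one kernel-verified Lean document; each statement's English description precedes it below -/
import Mathlib

section
/- In the group H = ⟨x₁,…,x_m ∣ V x_i V⁻¹ = x_{i+1}, i = 1,…,m−1⟩ with V = U₁^α U₂, the relation U₂U₁ = U₁^α U₂ holds, where U₁ is a word in x₁^{±1},…,x_{m−1}^{±1}, U₂ is a word in x₂^{±1},…,x_m^{±1}, and U₁^α is obtained from U₁ by increasing every subscript by 1. -/
/-- In H = ⟨x₁,…,x_m ∣ V x_i V⁻¹ = x_{i+1}⟩ with V = U₁^α U₂,
the relation U₂U₁ = U₁^α U₂ holds. Here m = n + 2 ≥ 2. -/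
theorem stmt1 (n : ℕ) (w v : FreeGroup (Fin (n + 1)))
    (U₁ U₁α U₂ : FreeGroup (Fin (n + 2)))
    (hU₁ : U₁ = FreeGroup.map Fin.castSucc w)
    (hU₁α : U₁α = FreeGroup.map Fin.succ w)
    (hU₂ : U₂ = FreeGroup.map Fin.succ v)
    (N : Subgroup (FreeGroup (Fin (n + 2))))
    (hN : N = Subgroup.normalClosure
      {r | ∃ i : Fin (n + 1), r =
        (U₁α * U₂) * FreeGroup.of i.castSucc * (U₁α * U₂)⁻¹ *
          (FreeGroup.of i.succ)⁻¹}) :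
    (QuotientGroup.mk (U₂ * U₁) : FreeGroup (Fin (n + 2)) ⧸ N) =
      QuotientGroup.mk (U₁α * U₂) := by
  haveI : N.Normal := by rw [hN]; exact Subgroup.normalClosure_normal
  set mk := QuotientGroup.mk' N with hmk
  have key : ∀ i : Fin (n + 1),
      mk (U₁α * U₂) * mk (FreeGroup.of i.castSucc) * (mk (U₁α * U₂))⁻¹
        = mk (FreeGroup.of i.succ) := by
    intro i
    have hmem : (U₁α * U₂) * FreeGroup.of i.castSucc * (U₁α * U₂)⁻¹ *
        (FreeGroup.of i.succ)⁻¹ ∈ N := by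
      rw [hN]
      exact Subgroup.subset_normalClosure ⟨i, rfl⟩
    have h1 : mk ((U₁α * U₂) * FreeGroup.of i.castSucc * (U₁α * U₂)⁻¹ *
        (FreeGroup.of i.succ)⁻¹) = 1 := by
      show QuotientGroup.mk' N _ = 1
      rw [← MonoidHom.mem_ker, QuotientGroup.ker_mk']
      exact hmem
    rw [map_mul, map_inv, mul_inv_eq_one] at h1
    simpa only [map_mul, map_inv] using h1
  -- conjugation by V sends map castSucc to map succ
  have main :
      mk (U₁α * U₂) * mk (FreeGroup.map Fin.castSucc w) * (mk (U₁α * U₂))⁻¹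
        = mk (FreeGroup.map Fin.succ w) := by
    let f : FreeGroup (Fin (n + 1)) →* FreeGroup (Fin (n + 2)) ⧸ N :=
      ((MulAut.conj (mk (U₁α * U₂))).toMonoidHom).comp
        (mk.comp (FreeGroup.map Fin.castSucc))
    let g : FreeGroup (Fin (n + 1)) →* FreeGroup (Fin (n + 2)) ⧸ N :=
      mk.comp (FreeGroup.map Fin.succ)
    have hfg : f = g := by
      apply FreeGroup.ext_hom
      intro i
      simpa [f, g, MulAut.conj, mul_assoc] using key i
    have := DFunLike.congr_fun hfg w
    simpa [f, g, MulAut.conj, mul_assoc] using this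
  rw [← hU₁, ← hU₁α] at main
  have : mk (U₁α * U₂) * mk U₁ = mk U₁α * mk (U₁α * U₂) := by
    rw [← main]; group
  simp only [map_mul] at this ⊢
  have h3 : mk U₂ * mk U₁ = mk U₁α * mk U₂ :=
    mul_left_cancel (a := mk U₁α) (by rw [← mul_assoc]; exact this)
  calc (QuotientGroup.mk (U₂ * U₁) : FreeGroup (Fin (n + 2)) ⧸ N)
      = mk (U₂ * U₁) := rfl
    _ = mk U₂ * mk U₁ := by simp [map_mul]
    _ = mk U₁α * mk U₂ := h3
    _ = mk (U₁α * U₂) := by simp [map_mul]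
    _ = QuotientGroup.mk (U₁α * U₂) := rfl
end

section
/- The groups G = ⟨x₁,…,x_m ∣ (U₂U₁) x_i (U₂U₁)⁻¹ = x_{i+1}, i = 1,…,m−1⟩ and H = ⟨x₁,…,x_m ∣ (U₁^α U₂) x_i (U₁^α U₂)⁻¹ = x_{i+1}, i = 1,…,m−1⟩ are isomorphic via an isomorphism fixing each generator x_i; in fact the two defining relator sets have the same normal closure in the free group on x₁,…,x_m. -/
private lemma key {n : ℕ} {Q : Type*} [Group Q] (π : FreeGroup (Fin (n+2)) →* Q) (c : Q)
    (h : ∀ i : Fin (n+1), c * π (FreeGroup.of i.castSucc) * c⁻¹ = π (FreeGroup.of i.succ))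
    (w : FreeGroup (Fin (n+1))) :
    c * π (FreeGroup.map Fin.castSucc w) * c⁻¹ = π (FreeGroup.map Fin.succ w) := by
  have := DFunLike.congr_fun (FreeGroup.ext_hom
    (((MulAut.conj c).toMonoidHom.comp (π.comp (FreeGroup.map Fin.castSucc))))
    (π.comp (FreeGroup.map Fin.succ)) (fun i => by
      simpa [MulAut.conj, mul_assoc] using h i)) w
  simpa [MulAut.conj, mul_assoc] using this

/-- The relator sets of G = ⟨x₁,…,x_m ∣ (U₂U₁)x_i(U₂U₁)⁻¹ = x_{i+1}⟩
and H = ⟨x₁,…,x_m ∣ (U₁^α U₂)x_i(U₁^α U₂)⁻¹ = x_{i+1}⟩ have the same normal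
closure in the free group; hence G and H are isomorphic fixing each generator. -/
theorem stmt2 (n : ℕ) (w v : FreeGroup (Fin (n + 1)))
    (U₁ U₁α U₂ : FreeGroup (Fin (n + 2)))
    (hU₁ : U₁ = FreeGroup.map Fin.castSucc w)
    (hU₁α : U₁α = FreeGroup.map Fin.succ w)
    (hU₂ : U₂ = FreeGroup.map Fin.succ v) :
    Subgroup.normalClosure
      {r : FreeGroup (Fin (n + 2)) | ∃ i : Fin (n + 1), r =
        (U₂ * U₁) * FreeGroup.of i.castSucc * (U₂ * U₁)⁻¹ *
          (FreeGroup.of i.succ)⁻¹} =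
    Subgroup.normalClosure
      {r : FreeGroup (Fin (n + 2)) | ∃ i : Fin (n + 1), r =
        (U₁α * U₂) * FreeGroup.of i.castSucc * (U₁α * U₂)⁻¹ *
          (FreeGroup.of i.succ)⁻¹} := by
  set A := {r : FreeGroup (Fin (n + 2)) | ∃ i : Fin (n + 1), r =
        (U₂ * U₁) * FreeGroup.of i.castSucc * (U₂ * U₁)⁻¹ * (FreeGroup.of i.succ)⁻¹}
    with hA
  set B := {r : FreeGroup (Fin (n + 2)) | ∃ i : Fin (n + 1), r =
        (U₁α * U₂) * FreeGroup.of i.castSucc * (U₁α * U₂)⁻¹ * (FreeGroup.of i.succ)⁻¹}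
    with hB
  apply le_antisymm
  · apply Subgroup.normalClosure_le_normal
    intro r hr
    obtain ⟨i, rfl⟩ := hr
    let N := Subgroup.normalClosure B
    let π := QuotientGroup.mk' N
    refine (QuotientGroup.eq_one_iff _).mp (?_ : π _ = 1)
    have hgen : ∀ j : Fin (n+1),
        π (U₁α * U₂) * π (FreeGroup.of j.castSucc) * (π (U₁α * U₂))⁻¹ = π (FreeGroup.of j.succ) := by
      intro j
      have h1 : π ((U₁α * U₂) * FreeGroup.of j.castSucc * (U₁α * U₂)⁻¹ * (FreeGroup.of j.succ)⁻¹) = 1 := by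
        rw [QuotientGroup.mk'_apply, QuotientGroup.eq_one_iff]
        exact Subgroup.subset_normalClosure ⟨j, rfl⟩
      rw [map_mul, map_inv, mul_inv_eq_one] at h1
      simpa only [map_mul, map_inv] using h1
    have hU : π (U₁α * U₂) * π U₁ * (π (U₁α * U₂))⁻¹ = π U₁α := by
      subst hU₁ hU₁α; exact key π _ hgen w
    have hd : π (U₂ * U₁) = π (U₁α * U₂) := by
      simp only [map_mul] at hU ⊢
      have h6 : π U₁α * π U₂ * π U₁ = π U₁α * (π U₁α * π U₂) := by
        have := hU
        calc π U₁α * π U₂ * π U₁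
            = (π U₁α * π U₂ * π U₁ * (π U₁α * π U₂)⁻¹) * (π U₁α * π U₂) := by group
          _ = π U₁α * (π U₁α * π U₂) := by rw [this]
      rw [mul_assoc] at h6
      exact mul_left_cancel h6
    simp only [map_mul, map_inv]
    have hh := hgen i
    simp only [map_mul] at hd hh
    rw [← hd] at hh
    rw [← hh]; group
  · apply Subgroup.normalClosure_le_normal
    intro r hr
    obtain ⟨i, rfl⟩ := hr
    let N := Subgroup.normalClosure A
    let π := QuotientGroup.mk' N
    refine (QuotientGroup.eq_one_iff _).mp (?_ : π _ = 1)
    have hgen : ∀ j : Fin (n+1),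
        π (U₂ * U₁) * π (FreeGroup.of j.castSucc) * (π (U₂ * U₁))⁻¹ = π (FreeGroup.of j.succ) := by
      intro j
      have h1 : π ((U₂ * U₁) * FreeGroup.of j.castSucc * (U₂ * U₁)⁻¹ * (FreeGroup.of j.succ)⁻¹) = 1 := by
        rw [QuotientGroup.mk'_apply, QuotientGroup.eq_one_iff]
        exact Subgroup.subset_normalClosure ⟨j, rfl⟩
      rw [map_mul, map_inv, mul_inv_eq_one] at h1
      simpa only [map_mul, map_inv] using h1
    have hU : π (U₂ * U₁) * π U₁ * (π (U₂ * U₁))⁻¹ = π U₁α := by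
      subst hU₁ hU₁α; exact key π _ hgen w
    have hd : π (U₁α * U₂) = π (U₂ * U₁) := by
      simp only [map_mul] at hU ⊢
      rw [← hU]; group
    simp only [map_mul, map_inv]
    have hh := hgen i
    simp only [map_mul] at hd hh
    rw [← hd] at hh
    rw [← hh]; group
end

section
/- In the group K = ⟨x₁,…,x_m, z ∣ z U₁^α U₂ (U₂U₁)⁻¹ = 1, (z U₁^α U₂) x_i (z U₁^α U₂)⁻¹ = x_{i+1} for i = 1,…,m−1⟩, one has z U₁^α U₂ U₁⁻¹ (z U₁^α U₂)⁻¹ = (U₁^α)⁻¹, and consequently z = 1 in K. -/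
/-- In K = ⟨x₁,…,x_m, z ∣ z U₁^α U₂ (U₂U₁)⁻¹ = 1,
(z U₁^α U₂) x_i (z U₁^α U₂)⁻¹ = x_{i+1}⟩, one has
z U₁^α U₂ U₁⁻¹ (z U₁^α U₂)⁻¹ = (U₁^α)⁻¹, and consequently z = 1 in K.
Generators: `some i` for x_{i+1} (i : Fin (n+2), m = n+2) and `none` for z. -/
theorem stmt3 (n : ℕ) (w v : FreeGroup (Fin (n + 1)))
    (U₁ U₁α U₂ z : FreeGroup (Option (Fin (n + 2))))
    (hz : z = FreeGroup.of none)
    (hU₁ : U₁ = FreeGroup.map (fun i => some i.castSucc) w)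
    (hU₁α : U₁α = FreeGroup.map (fun i => some i.succ) w)
    (hU₂ : U₂ = FreeGroup.map (fun i => some i.succ) v)
    (N : Subgroup (FreeGroup (Option (Fin (n + 2)))))
    (hN : N = Subgroup.normalClosure
      ({z * U₁α * U₂ * (U₂ * U₁)⁻¹} ∪
        {r | ∃ i : Fin (n + 1), r =
          (z * U₁α * U₂) * FreeGroup.of (some i.castSucc) * (z * U₁α * U₂)⁻¹ *
            (FreeGroup.of (some i.succ))⁻¹})) :
    (QuotientGroup.mk (z * U₁α * U₂ * U₁⁻¹ * (z * U₁α * U₂)⁻¹) :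
        FreeGroup (Option (Fin (n + 2))) ⧸ N) = QuotientGroup.mk U₁α⁻¹ ∧
      (QuotientGroup.mk z : FreeGroup (Option (Fin (n + 2))) ⧸ N) = QuotientGroup.mk 1 := by
  subst hN
  have hnorm : (Subgroup.normalClosure
      ({z * U₁α * U₂ * (U₂ * U₁)⁻¹} ∪
        {r | ∃ i : Fin (n + 1), r =
          (z * U₁α * U₂) * FreeGroup.of (some i.castSucc) * (z * U₁α * U₂)⁻¹ *
            (FreeGroup.of (some i.succ))⁻¹})).Normal := Subgroup.normalClosure_normal
  set N := Subgroup.normalClosure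
      ({z * U₁α * U₂ * (U₂ * U₁)⁻¹} ∪
        {r | ∃ i : Fin (n + 1), r =
          (z * U₁α * U₂) * FreeGroup.of (some i.castSucc) * (z * U₁α * U₂)⁻¹ *
            (FreeGroup.of (some i.succ))⁻¹}) with hNdef
  let φ : FreeGroup (Option (Fin (n + 2))) →* FreeGroup (Option (Fin (n + 2))) ⧸ N :=
    QuotientGroup.mk' N
  have hmem : ∀ g, g ∈ N → φ g = 1 := by
    intro g hg
    simpa [φ, QuotientGroup.eq_one_iff] using hg
  -- relation 1
  have hrel1 : φ (z * U₁α * U₂) = φ (U₂ * U₁) := by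
    have h := hmem _ (Subgroup.subset_normalClosure (Or.inl rfl))
    rw [map_mul, map_inv, mul_inv_eq_one] at h
    exact h
  -- relation 2
  have hrel2 : ∀ i : Fin (n + 1),
      φ (z * U₁α * U₂) * φ (FreeGroup.of (some i.castSucc)) * (φ (z * U₁α * U₂))⁻¹ =
        φ (FreeGroup.of (some i.succ)) := by
    intro i
    have h := hmem _ (Subgroup.subset_normalClosure (Or.inr ⟨i, rfl⟩))
    rw [map_mul, map_mul, map_mul, map_inv, map_inv, mul_inv_eq_one] at h
    exact h
  set T := φ (z * U₁α * U₂) with hT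
  -- conjugation hom equals shifted hom
  have hconj : ∀ u : FreeGroup (Fin (n + 1)),
      T * φ (FreeGroup.map (fun i => some i.castSucc) u) * T⁻¹ =
        φ (FreeGroup.map (fun i : Fin (n+1) => some i.succ) u) := by
    intro u
    have : ((MulAut.conj T).toMonoidHom.comp
        (φ.comp (FreeGroup.map (fun i : Fin (n+1) => some i.castSucc)))) =
        φ.comp (FreeGroup.map (fun i : Fin (n+1) => some i.succ)) := by
      apply FreeGroup.ext_hom
      intro a
      simpa [MulAut.conj, mul_assoc] using hrel2 a
    have h2 := DFunLike.congr_fun this u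
    simpa [MulAut.conj, mul_assoc] using h2
  have hkey : T * φ U₁ * T⁻¹ = φ U₁α := by
    rw [hU₁, hU₁α]; exact hconj w
  have goal1 : φ (z * U₁α * U₂ * U₁⁻¹ * (z * U₁α * U₂)⁻¹) = φ U₁α⁻¹ := by
    rw [map_mul, map_mul, map_inv, map_inv, map_inv, ← hT]
    calc T * (φ U₁)⁻¹ * T⁻¹ = (T * φ U₁ * T⁻¹)⁻¹ := by group
    _ = (φ U₁α)⁻¹ := by rw [hkey]
  have goal2 : φ z = 1 := by
    have h1 : T = φ U₂ * φ U₁ := by rw [hrel1, map_mul]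
    have h2 : T * φ U₁ = φ U₁α * T := by rw [← hkey]; group
    have h3 : φ U₂ * φ U₁ = φ U₁α * φ U₂ := by
      have h2' := h2
      rw [h1] at h2'
      have : φ U₂ * φ U₁ * φ U₁ = φ U₁α * φ U₂ * φ U₁ := by
        rw [h2']; group
      exact mul_right_cancel this
    have h4 : T = φ U₁α * φ U₂ := h1.trans h3
    have h5 : φ z * (φ U₁α * φ U₂) = φ U₁α * φ U₂ := by
      calc φ z * (φ U₁α * φ U₂) = T := by rw [hT, map_mul, map_mul]; group
      _ = φ U₁α * φ U₂ := h4
    exact mul_right_cancel (h5.trans (one_mul _).symm)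
  exact ⟨goal1, by simpa [φ] using goal2⟩
end
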